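/- arXiv:1111.3376 — 5 statements merged into one kernel-verified Lean document; each statement's English description precedes it below -/
import Mathlib

section
/- Let f_1,…,f_M ∈ ℝ^N be the columns of a matrix F that satisfies the (2K,δ)-restricted isometry property, where K ≥ 2 is an integer and δ is a real number. Then for every pair of nonempty subsets 𝒦, 𝒦' ⊆ {1,…,M} with |𝒦| ≤ K and |𝒦'| ≤ K, and every index m with m ∈ 𝒦 and m ∉ 𝒦', the distance between the equal-weight averages satisfies ‖(1/|𝒦|) Σ_{k∈𝒦} f_k − (1/|𝒦'|) Σ_{k∈𝒦'} f_k‖ ≥ √((1−δ)/(K(K−1))). -/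
open scoped RealInnerProductSpace

/-- Interpret a plain vector in `Fin n → ℝ` as an element of Euclidean space
(so that `‖·‖` is the Euclidean norm). -/
noncomputable def euc {n : ℕ} (v : Fin n → ℝ) : EuclideanSpace ℝ (Fin n) :=
  (WithLp.equiv 2 (Fin n → ℝ)).symm v

/-- `x` has at most `K` nonzero entries. -/
def Sparse {M : ℕ} (K : ℕ) (x : Fin M → ℝ) : Prop :=
  (Finset.univ.filter fun i => x i ≠ 0).card ≤ K

/-- `F` satisfies the `(K, δ)`-restricted isometry property:
`(1−δ)‖x‖² ≤ ‖Fx‖² ≤ (1+δ)‖x‖²` for every `K`-sparse `x`. -/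
def RIP {N M : ℕ} (K : ℕ) (δ : ℝ) (F : Matrix (Fin N) (Fin M) ℝ) : Prop :=
  ∀ x : Fin M → ℝ, Sparse K x →
    (1 - δ) * ‖euc x‖ ^ 2 ≤ ‖euc (F.mulVec x)‖ ^ 2 ∧
      ‖euc (F.mulVec x)‖ ^ 2 ≤ (1 + δ) * ‖euc x‖ ^ 2

/-! The difference of the two averages is `F x` for the coefficient vector
`x = 𝟙_𝒦 / |𝒦| - 𝟙_𝒦' / |𝒦'|`, which is `2K`-sparse, so RIP gives `‖F x‖² ≥ (1 - δ) ‖x‖²`.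
With `a = |𝒦|`, `b = |𝒦'|`, `c = |𝒦 ∩ 𝒦'|` one computes `‖x‖² = (a + b - 2c) / (a b)`, and
`m ∈ 𝒦 \ 𝒦'` forces this to be at least `1 / (K (K - 1))`. -/

open Finset Matrix

noncomputable def avgCoeff {ι : Type*} [DecidableEq ι] (s : Finset ι) : ι → ℝ :=
  fun i => if i ∈ s then (#s : ℝ)⁻¹ else 0

theorem Sparse.mono {M K L : ℕ} {x : Fin M → ℝ} (hx : Sparse K x) (h : K ≤ L) : Sparse L x :=
  hx.trans h

theorem sparse_avgCoeff_sub {M : ℕ} (s t : Finset (Fin M)) :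
    Sparse (#s + #t) (avgCoeff s - avgCoeff t) := by
  refine (card_le_card fun i hi => ?_).trans (card_union_le s t)
  simp only [mem_union]
  by_contra! h
  rw [mem_filter] at hi
  simp [avgCoeff, h.1, h.2] at hi

theorem mulVec_ite_mem {m ι R : Type*} [Fintype ι] [DecidableEq ι] [CommSemiring R]
    (F : Matrix m ι R) (s : Finset ι) (r : R) :
    F *ᵥ (fun i => if i ∈ s then r else 0) = r • ∑ k ∈ s, fun n => F n k := by
  ext n
  simp [mulVec, dotProduct, mul_ite, sum_ite_mem, mul_sum, mul_comm]

theorem euc_mulVec_avgCoeff {N M : ℕ} (F : Matrix (Fin N) (Fin M) ℝ) (s : Finset (Fin M)) :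
    euc (F *ᵥ avgCoeff s) = (#s : ℝ)⁻¹ • ∑ k ∈ s, euc (fun n => F n k) := by
  unfold avgCoeff
  rw [mulVec_ite_mem]
  simp [euc]

theorem euc_sub {n : ℕ} (v w : Fin n → ℝ) : euc (v - w) = euc v - euc w := rfl

theorem sum_sq_ite_sub_ite {ι : Type*} [Fintype ι] [DecidableEq ι] (s t : Finset ι) (r q : ℝ) :
    ∑ i, ((if i ∈ s then r else 0) - (if i ∈ t then q else 0)) ^ 2 =
      #s * r ^ 2 + #t * q ^ 2 - 2 * #(s ∩ t) * (r * q) := by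
  have h : ∀ i, ((if i ∈ s then r else 0) - (if i ∈ t then q else 0)) ^ 2 =
      (if i ∈ s then r ^ 2 else 0) + (if i ∈ t then q ^ 2 else 0) -
        (if i ∈ s ∩ t then 2 * (r * q) else 0) := by
    intro i
    by_cases hs : i ∈ s <;> by_cases ht : i ∈ t <;> simp [hs, ht]; ring
  simp only [h, sum_sub_distrib, sum_add_distrib, sum_ite_mem, univ_inter, sum_const,
    nsmul_eq_mul]
  ring

theorem norm_euc_avgCoeff_sub_sq {M : ℕ} (s t : Finset (Fin M)) :
    ‖euc (avgCoeff s - avgCoeff t)‖ ^ 2 =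
      (#s : ℝ)⁻¹ + (#t : ℝ)⁻¹ - 2 * #(s ∩ t) / (#s * #t) := by
  have mul_inv_sq (x : ℝ) : x * x⁻¹ ^ 2 = x⁻¹ := by
    rcases eq_or_ne x 0 with rfl | _
    · simp
    · field_simp
  simp only [EuclideanSpace.norm_sq_eq, euc, WithLp.equiv_symm_apply, Real.norm_eq_abs, sq_abs,
    Pi.sub_apply, avgCoeff, sum_sq_ite_sub_ite, mul_inv_sq]
  ring

/- `a + b - 2c` is the size of the symmetric difference: at least `1`, and at least `2` when
`a ≤ b` because `c < a`; in the remaining case `b < a ≤ K`, so `a b ≤ K (K - 1)`. -/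
theorem inv_mul_sub_one_le_inv_add_inv_sub_div {K a b c : ℕ} (hK : 2 ≤ K) (ha : a ≤ K)
    (hb : b ≤ K) (hb0 : 1 ≤ b) (hca : c + 1 ≤ a) (hcb : c ≤ b) :
    ((K : ℝ) * (K - 1))⁻¹ ≤ (a : ℝ)⁻¹ + (b : ℝ)⁻¹ - 2 * c / (a * b) := by
  rify at hK ha hb hb0 hca hcb
  have ha_ne : (a : ℝ) ≠ 0 := by linarith
  have hb_ne : (b : ℝ) ≠ 0 := by linarith
  rw [show (a : ℝ)⁻¹ + (b : ℝ)⁻¹ - 2 * c / (a * b) = (a + b - 2 * c) / (a * b) by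
    field_simp; ring, inv_eq_one_div, div_le_div_iff₀ (by nlinarith) (by positivity), one_mul]
  rcases le_or_gt a b with hab | hab
  · rify at hab
    calc (a : ℝ) * b ≤ K * K := by gcongr
      _ ≤ 2 * (K * (K - 1)) := by nlinarith
      _ ≤ (a + b - 2 * c) * (K * (K - 1)) := by gcongr <;> nlinarith
  · replace hab : b + 1 ≤ a := hab
    rify at hab
    calc (a : ℝ) * b ≤ K * (K - 1) := by gcongr; linarith
      _ ≤ (a + b - 2 * c) * (K * (K - 1)) := le_mul_of_one_le_left (by nlinarith) (by linarith)

theorem RIP.sqrt_mul_le_norm_mulVec {N M K : ℕ} {δ : ℝ} {F : Matrix (Fin N) (Fin M) ℝ}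
    (hF : RIP K δ F) {x : Fin M → ℝ} (hx : Sparse K x) {L : ℝ} (hL : 0 ≤ L)
    (hLx : L ≤ ‖euc x‖ ^ 2) : √((1 - δ) * L) ≤ ‖euc (F *ᵥ x)‖ := by
  refine Real.sqrt_le_iff.mpr ⟨norm_nonneg _, ?_⟩
  rcases le_total 0 (1 - δ) with hδ | hδ
  · exact (mul_le_mul_of_nonneg_left hLx hδ).trans (hF x hx).1
  · exact (mul_nonpos_of_nonpos_of_nonneg hδ hL).trans (sq_nonneg _)

theorem stmt_0_general {N M : ℕ} (K : ℕ) (hK : 2 ≤ K) (δ : ℝ)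
    (F : Matrix (Fin N) (Fin M) ℝ) (hRIP : RIP (2 * K) δ F)
    (𝒦 𝒦' : Finset (Fin M)) (h𝒦' : 𝒦'.Nonempty)
    (hc : 𝒦.card ≤ K) (hc' : 𝒦'.card ≤ K)
    (m : Fin M) (hm : m ∈ 𝒦) (hm' : m ∉ 𝒦') :
    Real.sqrt ((1 - δ) / ((K : ℝ) * ((K : ℝ) - 1))) ≤
      ‖(𝒦.card : ℝ)⁻¹ • ∑ k ∈ 𝒦, euc (fun n => F n k) -
        (𝒦'.card : ℝ)⁻¹ • ∑ k ∈ 𝒦', euc (fun n => F n k)‖ := by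
  have hinter : #(𝒦 ∩ 𝒦') < #𝒦 :=
    card_lt_card ⟨inter_subset_left, fun h => hm' (inter_subset_right (h hm))⟩
  have hbound := inv_mul_sub_one_le_inv_add_inv_sub_div hK hc hc' h𝒦'.card_pos hinter
    (card_le_card inter_subset_right)
  rw [div_eq_mul_inv, ← euc_mulVec_avgCoeff, ← euc_mulVec_avgCoeff, ← euc_sub, ← mulVec_sub]
  refine hRIP.sqrt_mul_le_norm_mulVec ((sparse_avgCoeff_sub 𝒦 𝒦').mono (by omega)) ?_ ?_
  · rify at hK
    exact inv_nonneg.mpr (by nlinarith)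
  · rwa [norm_euc_avgCoeff_sub_sq]

theorem stmt_0 {N M : ℕ} (K : ℕ) (hK : 2 ≤ K) (δ : ℝ)
    (F : Matrix (Fin N) (Fin M) ℝ) (hRIP : RIP (2 * K) δ F)
    (𝒦 𝒦' : Finset (Fin M)) (h𝒦 : 𝒦.Nonempty) (h𝒦' : 𝒦'.Nonempty)
    (hc : 𝒦.card ≤ K) (hc' : 𝒦'.card ≤ K)
    (m : Fin M) (hm : m ∈ 𝒦) (hm' : m ∉ 𝒦') :
    Real.sqrt ((1 - δ) / ((K : ℝ) * ((K : ℝ) - 1))) ≤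
      ‖(𝒦.card : ℝ)⁻¹ • ∑ k ∈ 𝒦, euc (fun n => F n k) -
        (𝒦'.card : ℝ)⁻¹ • ∑ k ∈ 𝒦', euc (fun n => F n k)‖ :=
  stmt_0_general K hK δ F hRIP 𝒦 𝒦' h𝒦' hc hc' m hm hm'
end

section
/- Let s ∈ ℝ^N, let 𝒦 be a nonempty finite index set, and let {f_k}_{k∈𝒦} be vectors in ℝ^N of equal norm (‖f_k‖ = ‖f_{k'}‖ for all k, k' ∈ 𝒦) that do not lie in a common hyperplane, in the sense that for every nonzero v ∈ ℝ^N the function k ↦ ⟨v, f_k⟩ is not constant on 𝒦. Define g : ℝ^N → ℝ by g(x) := Σ_{k∈𝒦} ( ‖x−(s+f_k)‖² − (1/|𝒦|) Σ_{k'∈𝒦} ‖x−(s+f_{k'})‖² )². Then s is the unique global minimizer of g; more precisely, g(s) = 0 and g(x) > 0 for every x ≠ s. -/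
open scoped RealInnerProductSpace

/-
Expanding the square, ‖x - (s + f k)‖² = ‖x - s‖² - 2⟪x - s, f k⟫ + ‖f k‖², and the last term does
not depend on k. Hence g(x) = 4 ∑ₖ (bₖ - b̄)² with bₖ = ⟪x - s, f k⟫ and b̄ their mean: it vanishes
at x = s, and for x ≠ s the hyperplane condition applied to v = x - s makes the bₖ non-constant.
-/

section Variance

variable {ι : Type*} [Fintype ι]

theorem sum_sq_sub_mean_eq_zero_of_forall_eq {a : ι → ℝ} (h : ∀ k k', a k = a k') :
    ∑ k, (a k - (Fintype.card ι : ℝ)⁻¹ * ∑ k', a k') ^ 2 = 0 := by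
  refine Finset.sum_eq_zero fun k _ => ?_
  have : Nonempty ι := ⟨k⟩
  have hcard : (Fintype.card ι : ℝ) ≠ 0 := Nat.cast_ne_zero.mpr Fintype.card_ne_zero
  have hsum : ∑ k', a k' = Fintype.card ι * a k := by
    simp [fun k' => h k' k]
  rw [hsum, inv_mul_cancel_left₀ hcard, sub_self, sq, mul_zero]

theorem sum_sq_sub_mean_pos {a : ι → ℝ} {k k' : ι} (hne : a k ≠ a k') :
    0 < ∑ k, (a k - (Fintype.card ι : ℝ)⁻¹ * ∑ k', a k') ^ 2 := by
  set m := (Fintype.card ι : ℝ)⁻¹ * ∑ k', a k'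
  obtain ⟨i, hi⟩ : ∃ i, a i ≠ m := by
    by_contra! h
    exact hne ((h k).trans (h k').symm)
  have : a i - m ≠ 0 := sub_ne_zero.mpr hi
  exact Finset.sum_pos' (fun _ _ => sq_nonneg _) ⟨i, Finset.mem_univ _, by positivity⟩

end Variance

theorem norm_sub_sq_ne_of_inner_ne {E : Type*} [NormedAddCommGroup E] [InnerProductSpace ℝ E]
    {y u v : E} (huv : ‖u‖ = ‖v‖) (h : ⟪y, u⟫ ≠ ⟪y, v⟫) : ‖y - u‖ ^ 2 ≠ ‖y - v‖ ^ 2 := by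
  rw [norm_sub_sq_real, norm_sub_sq_real, huv]
  contrapose! h
  linarith

theorem stmt_4_general {N : ℕ} {ι : Type*} [Fintype ι]
    (s : EuclideanSpace ℝ (Fin N)) (f : ι → EuclideanSpace ℝ (Fin N))
    (heq : ∀ k k' : ι, ‖f k‖ = ‖f k'‖)
    (hhyp : ∀ v : EuclideanSpace ℝ (Fin N), v ≠ 0 → ∃ k k' : ι, ⟪v, f k⟫ ≠ ⟪v, f k'⟫)
    (g : EuclideanSpace ℝ (Fin N) → ℝ)
    (hg : ∀ x, g x = ∑ k : ι,
      (‖x - (s + f k)‖ ^ 2 - (Fintype.card ι : ℝ)⁻¹ * ∑ k' : ι, ‖x - (s + f k')‖ ^ 2) ^ 2) :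
    g s = 0 ∧ ∀ x, x ≠ s → 0 < g x := by
  refine ⟨?_, fun x hx => ?_⟩
  · rw [hg]
    refine sum_sq_sub_mean_eq_zero_of_forall_eq fun k k' => ?_
    simp only [sub_add_cancel_left, norm_neg, heq k k']
  · obtain ⟨k, k', hkk'⟩ := hhyp (x - s) (sub_ne_zero.mpr hx)
    rw [hg]
    refine sum_sq_sub_mean_pos (k := k) (k' := k') ?_
    simp only [sub_add_eq_sub_sub]
    exact norm_sub_sq_ne_of_inner_ne (heq k k') hkk'

theorem stmt_4 {N : ℕ} {ι : Type*} [Fintype ι] [Nonempty ι]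
    (s : EuclideanSpace ℝ (Fin N)) (f : ι → EuclideanSpace ℝ (Fin N))
    (heq : ∀ k k' : ι, ‖f k‖ = ‖f k'‖)
    (hhyp : ∀ v : EuclideanSpace ℝ (Fin N), v ≠ 0 → ∃ k k' : ι, ⟪v, f k⟫ ≠ ⟪v, f k'⟫)
    (g : EuclideanSpace ℝ (Fin N) → ℝ)
    (hg : ∀ x, g x = ∑ k : ι,
      (‖x - (s + f k)‖ ^ 2 - (Fintype.card ι : ℝ)⁻¹ * ∑ k' : ι, ‖x - (s + f k')‖ ^ 2) ^ 2) :
    g s = 0 ∧ ∀ x, x ≠ s → 0 < g x :=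
  stmt_4_general s f heq hhyp g hg
end

section
/- Let f_1,…,f_M ∈ ℝ^N satisfy ‖f_i‖ = γ for all i, where γ > 0, and |⟨f_i,f_j⟩| ≤ μγ² for all i ≠ j. Let 𝒦 ⊆ {1,…,M} be nonempty, let (α_k)_{k∈𝒦} be nonnegative reals with Σ_{k∈𝒦} α_k = 1, and let m ∉ 𝒦. Let σ > 0 and let ε be a random vector in ℝ^N whose N coordinates are i.i.d. Gaussian N(0,σ²). Then for every τ ∈ ℝ, the probability that the test statistic T_m(z) := ⟨Σ_{k∈𝒦} α_k f_k + ε, f_m⟩/γ² satisfies T_m(z) ≥ τ is at most Q((γ/σ)(τ − μ)). -/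
open MeasureTheory ProbabilityTheory
open scoped RealInnerProductSpace

/-- The law of a random vector in `ℝ^N` whose `N` coordinates are
i.i.d. Gaussian `N(0, σ²)`. -/
noncomputable def iidGaussian (N : ℕ) (σ : ℝ) : Measure (Fin N → ℝ) :=
  Measure.pi fun _ : Fin N => gaussianReal 0 ⟨σ ^ 2, sq_nonneg σ⟩

/-- The standard Gaussian tail function `Q(x)`, as the measure of `[x, ∞)`
under the standard Gaussian measure `N(0,1)` on `ℝ`. -/
noncomputable def gaussQ (x : ℝ) : ENNReal := gaussianReal 0 1 (Set.Ici x)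

/-! The test statistic splits as `⟪∑ α_k f_k, f_m⟫ / γ² + ⟪ε, f_m⟫ / γ²`. The first term is a
convex combination of cross-correlations `⟪f_k, f_m⟫` with `k ≠ m`, hence at most `μ`. The second
is a centred Gaussian of variance `σ² ‖f_m‖² / γ⁴ = σ² / γ²`, as its characteristic function shows.
So the event lies in `{⟪ε, f_m⟫ ≥ (τ - μ) γ²}`, whose probability is `Q((γ / σ)(τ - μ))`. -/

open Set
open scoped NNReal

lemma charFun_map_inner {E : Type*} [NormedAddCommGroup E] [InnerProductSpace ℝ E]
    [MeasurableSpace E] [BorelSpace E] (ν : Measure E) (w : E) (t : ℝ) :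
    charFun (ν.map fun x ↦ ⟪x, w⟫) t = charFun ν (t • w) := by
  rw [charFun_apply_real, charFun_apply, integral_map (by fun_prop) (by fun_prop)]
  simp [inner_smul_right, mul_comm]

lemma map_inner_toLp_pi_gaussianReal {ι : Type*} [Fintype ι] (v : ℝ≥0)
    (w : EuclideanSpace ℝ ι) :
    (Measure.pi fun _ : ι ↦ gaussianReal 0 v).map (fun e ↦ ⟪WithLp.toLp 2 e, w⟫) =
      gaussianReal 0 (‖w‖₊ ^ 2 * v) := by
  refine Measure.ext_of_charFun (funext fun t ↦ ?_)
  rw [show (fun e : ι → ℝ ↦ ⟪WithLp.toLp 2 e, w⟫) = (⟪·, w⟫) ∘ WithLp.toLp 2 from rfl,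
    ← Measure.map_map (by fun_prop) (by fun_prop), charFun_map_inner, charFun_pi]
  simp_rw [charFun_gaussianReal, ← Complex.exp_sum]
  congr 1
  rw [NNReal.coe_mul, NNReal.coe_pow, coe_nnnorm, EuclideanSpace.real_norm_sq_eq]
  push_cast
  simp only [PiLp.smul_apply, smul_eq_mul, Complex.ofReal_mul, mul_zero, zero_mul, zero_sub,
    Finset.sum_neg_distrib, ← Finset.sum_div]
  ring_nf
  rw [Finset.mul_sum]

lemma gaussianReal_Ici_eq_gaussQ {v : ℝ≥0} {s : ℝ} (hs : 0 < s) (hv : (v : ℝ) = s ^ 2)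
    (x : ℝ) : gaussianReal 0 v (Ici x) = gaussQ (x / s) := by
  have hmap : (gaussianReal 0 1).map (s * ·) = gaussianReal 0 v := by
    rw [gaussianReal_map_const_mul, mul_zero, mul_one]
    congr 1
    ext
    simp [hv]
  rw [← hmap, Measure.map_apply (by fun_prop) measurableSet_Ici, gaussQ]
  congr 1
  ext y
  simp [div_le_iff₀ hs, mul_comm]

theorem stmt_5_general {N M : ℕ} (f : Fin M → EuclideanSpace ℝ (Fin N)) (γ μ : ℝ)
    (hγ : 0 < γ) (hnorm : ∀ i, ‖f i‖ = γ)
    (hcoh : ∀ i j, i ≠ j → |⟪f i, f j⟫| ≤ μ * γ ^ 2)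
    (𝒦 : Finset (Fin M))
    (α : Fin M → ℝ) (hα : ∀ k ∈ 𝒦, 0 ≤ α k) (hsum : ∑ k ∈ 𝒦, α k = 1)
    (m : Fin M) (hm : m ∉ 𝒦) (σ : ℝ) (hσ : 0 < σ) (τ : ℝ) :
    iidGaussian N σ
      {e | τ ≤ ⟪(∑ k ∈ 𝒦, α k • f k) + euc e, f m⟫ / γ ^ 2} ≤
      gaussQ ((γ / σ) * (τ - μ)) := by
  have hcomb : ⟪∑ k ∈ 𝒦, α k • f k, f m⟫ ≤ μ * γ ^ 2 := by
    refine (convex_halfSpace_le (f := (⟪·, f m⟫)) ⟨(inner_add_left · · _),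
      fun c x ↦ real_inner_smul_left x _ c⟩ _).sum_mem hα hsum fun k hk ↦ ?_
    exact (le_abs_self _).trans (hcoh k m (ne_of_mem_of_not_mem hk hm))
  have hevent : {e | τ ≤ ⟪(∑ k ∈ 𝒦, α k • f k) + euc e, f m⟫ / γ ^ 2} ⊆
      (fun e ↦ ⟪WithLp.toLp 2 e, f m⟫) ⁻¹' Ici ((τ - μ) * γ ^ 2) := by
    intro e he
    rw [mem_ofPred_eq, le_div_iff₀ (by positivity), inner_add_left] at he
    change _ ≤ ⟪euc e, f m⟫
    linarith
  have hlaw : (iidGaussian N σ).map (fun e ↦ ⟪WithLp.toLp 2 e, f m⟫) =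
      gaussianReal 0 (‖f m‖₊ ^ 2 * ⟨σ ^ 2, sq_nonneg σ⟩) :=
    map_inner_toLp_pi_gaussianReal _ _
  calc _ ≤ iidGaussian N σ ((fun e ↦ ⟪WithLp.toLp 2 e, f m⟫) ⁻¹' Ici ((τ - μ) * γ ^ 2)) :=
        measure_mono hevent
    _ = gaussQ ((τ - μ) * γ ^ 2 / (γ * σ)) := by
        rw [← Measure.map_apply (by fun_prop) measurableSet_Ici, hlaw]
        refine gaussianReal_Ici_eq_gaussQ (by positivity) ?_ _
        change ‖f m‖ ^ 2 * σ ^ 2 = _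
        rw [hnorm, mul_pow]
    _ = gaussQ ((γ / σ) * (τ - μ)) := by
        congr 1
        field_simp

theorem stmt_5 {N M : ℕ} (f : Fin M → EuclideanSpace ℝ (Fin N)) (γ μ : ℝ)
    (hγ : 0 < γ) (hnorm : ∀ i, ‖f i‖ = γ)
    (hcoh : ∀ i j, i ≠ j → |⟪f i, f j⟫| ≤ μ * γ ^ 2)
    (𝒦 : Finset (Fin M)) (h𝒦 : 𝒦.Nonempty)
    (α : Fin M → ℝ) (hα : ∀ k ∈ 𝒦, 0 ≤ α k) (hsum : ∑ k ∈ 𝒦, α k = 1)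
    (m : Fin M) (hm : m ∉ 𝒦) (σ : ℝ) (hσ : 0 < σ) (τ : ℝ) :
    iidGaussian N σ
      {e | τ ≤ ⟪(∑ k ∈ 𝒦, α k • f k) + euc e, f m⟫ / γ ^ 2} ≤
      gaussQ ((γ / σ) * (τ - μ)) :=
  stmt_5_general f γ μ hγ hnorm hcoh 𝒦 α hα hsum m hm σ hσ τ
end

section
/- Let f_1,…,f_M ∈ ℝ^N satisfy ‖f_i‖ = γ for all i, where γ > 0, and |⟨f_i,f_j⟩| ≤ μγ² for all i ≠ j, with μ ≥ 0. Let 𝒦 ⊆ {1,…,M} be nonempty, let (α_k)_{k∈𝒦} be nonnegative reals with Σ_{k∈𝒦} α_k = 1, and let m ∈ 𝒦. Let σ > 0 and let ε be a random vector in ℝ^N whose N coordinates are i.i.d. Gaussian N(0,σ²). Then for every τ ∈ ℝ, the probability that the test statistic T_m(z) := ⟨Σ_{k∈𝒦} α_k f_k + ε, f_m⟩/γ² satisfies T_m(z) < τ is at most Q((γ/σ)((α_m(1+μ) − μ) − τ)). -/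
open MeasureTheory ProbabilityTheory
open scoped RealInnerProductSpace

/-! The statistic is a deterministic signal term plus the Gaussian noise term
`⟪ε, f_m⟫ / γ²`. By coherence the signal is at least `α_m (1 + μ) - μ`, and since the
i.i.d. Gaussian vector is `σ` times a standard Gaussian on Euclidean space, `⟪ε, f_m⟫` is
`N(0, σ²γ²)`; the lower tail of that law is the Gaussian tail `Q`. -/

@[fun_prop]
lemma measurable_euc {n : ℕ} : Measurable (euc (n := n)) :=
  (MeasurableEquiv.toLp 2 (Fin n → ℝ)).measurable

lemma iidGaussian_eq_map_smul (N : ℕ) (σ : ℝ) :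
    iidGaussian N σ = (Measure.pi fun _ : Fin N => gaussianReal 0 1).map (σ • ·) := by
  have hsmul : (σ • · : (Fin N → ℝ) → Fin N → ℝ) = fun x i => σ * x i := rfl
  rw [hsmul, Measure.pi_map_pi fun _ => (measurable_const_mul σ).aemeasurable,
    gaussianReal_map_const_mul]
  simp only [mul_zero, mul_one]
  rfl

lemma map_inner_euc_iidGaussian (N : ℕ) (σ : ℝ) (u : EuclideanSpace ℝ (Fin N)) :
    (iidGaussian N σ).map (fun e => ⟪euc e, u⟫) =
      gaussianReal 0 ⟨(σ * ‖u‖) ^ 2, sq_nonneg _⟩ := by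
  have hcomp : (fun e => ⟪euc e, u⟫) ∘ (σ • ·) =
      (σ * ·) ∘ innerSL ℝ u ∘ WithLp.toLp 2 := by
    ext x
    simp [euc, real_inner_comm, real_inner_smul_right]
  rw [iidGaussian_eq_map_smul, Measure.map_map (by fun_prop) (by fun_prop), hcomp,
    ← Measure.map_map (by fun_prop) (by fun_prop), ← Measure.map_map (by fun_prop) (by fun_prop),
    map_pi_eq_stdGaussian, IsGaussian.map_eq_gaussianReal, integral_strongDual_stdGaussian,
    variance_dual_stdGaussian, innerSL_apply_norm, gaussianReal_map_const_mul]
  congr 1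
  · ring
  · ext
    simp only [NNReal.coe_mk, Real.coe_toNNReal _ (sq_nonneg _), NNReal.coe_mul, mul_pow]
    rfl

lemma gaussianReal_Iio_le_gaussQ {s : ℝ} (hs : 0 < s) (c : ℝ) :
    gaussianReal 0 ⟨s ^ 2, sq_nonneg s⟩ (Set.Iio c) ≤ gaussQ (-c / s) := by
  -- scaling by `-s` produces the variance and the reflection `x ↦ -x` at once
  have hscale : gaussianReal 0 ⟨s ^ 2, sq_nonneg s⟩ = (gaussianReal 0 1).map (fun x => -s * x) := by
    rw [gaussianReal_map_const_mul]
    congr 1 <;> simp only [mul_zero, neg_sq, mul_one]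
    rfl
  rw [hscale, Measure.map_apply (measurable_const_mul _) measurableSet_Iio, gaussQ]
  refine measure_mono fun x hx => ?_
  simp only [Set.mem_preimage, Set.mem_Iio, Set.mem_Ici] at hx ⊢
  rw [div_le_iff₀ hs]
  linarith

lemma le_inner_sum_smul_of_coherence {ι E : Type*} [NormedAddCommGroup E] [InnerProductSpace ℝ E]
    {f : ι → E} {K : Finset ι} {α : ι → ℝ} {m : ι} {γ μ : ℝ} (hm : m ∈ K)
    (hnorm : ‖f m‖ = γ) (hcoh : ∀ k ∈ K, k ≠ m → |⟪f k, f m⟫| ≤ μ * γ ^ 2)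
    (hα : ∀ k ∈ K, 0 ≤ α k) (hsum : ∑ k ∈ K, α k = 1) :
    γ ^ 2 * (α m * (1 + μ) - μ) ≤ ⟪∑ k ∈ K, α k • f k, f m⟫ := by
  classical
  have hcross : ∑ k ∈ K.erase m, α k * -(μ * γ ^ 2) ≤ ∑ k ∈ K.erase m, α k * ⟪f k, f m⟫ :=
    Finset.sum_le_sum fun k hk => mul_le_mul_of_nonneg_left
      (neg_le_of_abs_le (hcoh k (Finset.mem_of_mem_erase hk) (Finset.ne_of_mem_erase hk)))
      (hα k (Finset.mem_of_mem_erase hk))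
  have hrest : ∑ k ∈ K.erase m, α k = 1 - α m := by
    rw [← hsum, ← Finset.add_sum_erase K α hm, add_sub_cancel_left]
  rw [← Finset.sum_mul, hrest] at hcross
  rw [sum_inner, ← Finset.add_sum_erase _ _ hm]
  simp only [real_inner_smul_left, real_inner_self_eq_norm_sq, hnorm]
  linarith

theorem stmt_6_general {N M : ℕ} (f : Fin M → EuclideanSpace ℝ (Fin N)) (γ μ : ℝ)
    (hγ : 0 < γ) (hnorm : ∀ i, ‖f i‖ = γ)
    (hcoh : ∀ i j, i ≠ j → |⟪f i, f j⟫| ≤ μ * γ ^ 2)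
    (𝒦 : Finset (Fin M))
    (α : Fin M → ℝ) (hα : ∀ k ∈ 𝒦, 0 ≤ α k) (hsum : ∑ k ∈ 𝒦, α k = 1)
    (m : Fin M) (hm : m ∈ 𝒦) (σ : ℝ) (hσ : 0 < σ) (τ : ℝ) :
    iidGaussian N σ
      {e | ⟪(∑ k ∈ 𝒦, α k • f k) + euc e, f m⟫ / γ ^ 2 < τ} ≤
      gaussQ ((γ / σ) * ((α m * (1 + μ) - μ) - τ)) := by
  set A := α m * (1 + μ) - μ
  have hsignal : γ ^ 2 * A ≤ ⟪∑ k ∈ 𝒦, α k • f k, f m⟫ :=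
    le_inner_sum_smul_of_coherence hm (hnorm m) (fun k _ hk => hcoh k m hk) hα hsum
  have hevent : {e | ⟪(∑ k ∈ 𝒦, α k • f k) + euc e, f m⟫ / γ ^ 2 < τ} ⊆
      (fun e => ⟪euc e, f m⟫) ⁻¹' Set.Iio (γ ^ 2 * (τ - A)) := by
    intro e he
    rw [Set.mem_ofPred_eq, div_lt_iff₀ (by positivity), inner_add_left] at he
    rw [Set.mem_preimage, Set.mem_Iio]
    linarith
  calc iidGaussian N σ {e | ⟪(∑ k ∈ 𝒦, α k • f k) + euc e, f m⟫ / γ ^ 2 < τ}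
      ≤ (iidGaussian N σ).map (fun e => ⟪euc e, f m⟫) (Set.Iio (γ ^ 2 * (τ - A))) :=
        (measure_mono hevent).trans (Measure.le_map_apply (by fun_prop) _)
    _ = gaussianReal 0 ⟨(σ * γ) ^ 2, sq_nonneg _⟩ (Set.Iio (γ ^ 2 * (τ - A))) := by
        rw [map_inner_euc_iidGaussian, hnorm m]
    _ ≤ gaussQ (-(γ ^ 2 * (τ - A)) / (σ * γ)) := gaussianReal_Iio_le_gaussQ (by positivity) _
    _ = gaussQ ((γ / σ) * (A - τ)) := by
        congr 1
        field_simp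
        ring

theorem stmt_6 {N M : ℕ} (f : Fin M → EuclideanSpace ℝ (Fin N)) (γ μ : ℝ)
    (hγ : 0 < γ) (hμ : 0 ≤ μ) (hnorm : ∀ i, ‖f i‖ = γ)
    (hcoh : ∀ i j, i ≠ j → |⟪f i, f j⟫| ≤ μ * γ ^ 2)
    (𝒦 : Finset (Fin M)) (h𝒦 : 𝒦.Nonempty)
    (α : Fin M → ℝ) (hα : ∀ k ∈ 𝒦, 0 ≤ α k) (hsum : ∑ k ∈ 𝒦, α k = 1)
    (m : Fin M) (hm : m ∈ 𝒦) (σ : ℝ) (hσ : 0 < σ) (τ : ℝ) :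
    iidGaussian N σ
      {e | ⟪(∑ k ∈ 𝒦, α k • f k) + euc e, f m⟫ / γ ^ 2 < τ} ≤
      gaussQ ((γ / σ) * ((α m * (1 + μ) - μ) - τ)) :=
  stmt_6_general f γ μ hγ hnorm hcoh 𝒦 α hα hsum m hm σ hσ τ
end

section
/- Let f_1,…,f_M ∈ ℝ^N satisfy ‖f_i‖ = γ for all i, where γ > 0, and |⟨f_i,f_j⟩| ≤ μγ² for all i ≠ j, with μ ≥ 0. Let 𝒦 ⊆ {1,…,M} be a coalition with |𝒦| = K ≥ 1, let σ > 0, and let ε be a random vector in ℝ^N whose N coordinates are i.i.d. Gaussian N(0,σ²). Then for every choice of nonnegative weights (α_k)_{k∈𝒦} with Σ_{k∈𝒦} α_k = 1 and every τ ∈ ℝ, there exists m ∈ 𝒦 such that the probability that the test statistic T_m(z) := ⟨Σ_{k∈𝒦} α_k f_k + ε, f_m⟩/γ² satisfies T_m(z) < τ is at most Q((γ/σ)(((1+μ)/K − μ) − τ)). -/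
open MeasureTheory ProbabilityTheory
open scoped RealInnerProductSpace

/-! Pick `m` with the largest weight, so that `α m ≥ 1 / K`. Coherence bounds the cross terms,
giving `⟪∑ α k • f k, f m⟫ ≥ γ² (α m (1 + μ) - μ) ≥ γ² ((1 + μ) / K - μ)`. The noise term
`⟪ε, f m⟫` is `N(0, σ² γ²)`, because a linear form of the standard Gaussian on a Euclidean space
is a centred Gaussian with variance the squared norm of the form; the event `T_m < τ` is then a
Gaussian lower tail. -/

open Finset
open scoped NNReal

lemma stdGaussian_map_inner {E : Type*} [NormedAddCommGroup E] [InnerProductSpace ℝ E]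
    [FiniteDimensional ℝ E] [MeasurableSpace E] [BorelSpace E] (u : E) :
    (stdGaussian E).map (fun x => ⟪x, u⟫) = gaussianReal 0 (‖u‖₊ ^ 2) := by
  have hL : (fun x => ⟪x, u⟫) = innerSL ℝ u := by
    ext x; rw [innerSL_apply_apply, real_inner_comm]
  rw [hL, IsGaussian.map_eq_gaussianReal, integral_strongDual_stdGaussian,
    variance_dual_stdGaussian, innerSL_apply_norm]
  congr
  ext; simp

@[fun_prop]
lemma measurable_euc_s7 (N : ℕ) : Measurable (euc : (Fin N → ℝ) → EuclideanSpace ℝ (Fin N)) :=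
  (PiLp.continuous_toLp 2 fun _ : Fin N => ℝ).measurable

lemma iidGaussian_map_euc (N : ℕ) (σ : ℝ) :
    (iidGaussian N σ).map euc = (stdGaussian (EuclideanSpace ℝ (Fin N))).map (σ • ·) := by
  have hscale : gaussianReal 0 ⟨σ ^ 2, sq_nonneg σ⟩ = (gaussianReal 0 1).map (σ * ·) := by
    rw [gaussianReal_map_const_mul, mul_zero, mul_one]
    rfl
  rw [iidGaussian, hscale, ← Measure.pi_map_pi (fun _ => by fun_prop),
    Measure.map_map (measurable_euc_s7 N) (by fun_prop), ← map_pi_eq_stdGaussian,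
    Measure.map_map (by fun_prop) (by fun_prop)]
  rfl

lemma iidGaussian_map_inner (N : ℕ) (σ : ℝ) (u : EuclideanSpace ℝ (Fin N)) :
    (iidGaussian N σ).map (fun e => ⟪euc e, u⟫) = gaussianReal 0 (‖σ • u‖₊ ^ 2) := by
  have h : (fun x => ⟪x, u⟫) ∘ (σ • ·) = fun x : EuclideanSpace ℝ (Fin N) => ⟪x, σ • u⟫ := by
    ext x; simp [real_inner_smul_left, real_inner_smul_right]
  rw [show (fun e => ⟪euc e, u⟫) = (fun x => ⟪x, u⟫) ∘ euc from rfl,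
    ← Measure.map_map (by fun_prop) (measurable_euc_s7 N), iidGaussian_map_euc,
    Measure.map_map (by fun_prop) (by fun_prop), h, stdGaussian_map_inner]

lemma gaussianReal_sq_Iic_neg_eq_gaussQ {s : ℝ≥0} (hs : 0 < s) (t : ℝ) :
    gaussianReal 0 (s ^ 2) (Set.Iic (-t)) = gaussQ (t / s) := by
  have h : gaussianReal 0 (s ^ 2) = (gaussianReal 0 1).map (-(s : ℝ) * ·) := by
    rw [gaussianReal_map_const_mul, mul_zero, mul_one]
    congr; ext; simp
  rw [h, Measure.map_apply (by fun_prop) measurableSet_Iic, gaussQ]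
  congr 1
  ext x
  simp only [Set.mem_preimage, Set.mem_Iic, Set.mem_Ici, div_le_iff₀ (show (0:ℝ) < s from hs)]
  constructor <;> intro h <;> linarith

lemma gaussQ_antitone : Antitone gaussQ :=
  fun _ _ h => measure_mono (Set.Ici_subset_Ici.mpr h)

lemma exists_inv_card_le_of_sum_eq_one {ι : Type*} {s : Finset ι} (hs : s.Nonempty)
    {α : ι → ℝ} (hsum : ∑ k ∈ s, α k = 1) : ∃ m ∈ s, (#s : ℝ)⁻¹ ≤ α m := by
  refine exists_le_of_sum_le hs ?_
  rw [sum_const, nsmul_eq_mul, mul_inv_cancel₀ (by simpa using hs.card_pos.ne'), hsum]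

lemma le_inner_sum_smul {E ι : Type*} [NormedAddCommGroup E] [InnerProductSpace ℝ E]
    [DecidableEq ι] (f : ι → E) {s : Finset ι} {α : ι → ℝ} (hα : ∀ k ∈ s, 0 ≤ α k)
    (hsum : ∑ k ∈ s, α k = 1) {m : ι} (hm : m ∈ s) {γ μ : ℝ} (hnorm : ‖f m‖ = γ)
    (hcoh : ∀ k ∈ s, k ≠ m → |⟪f k, f m⟫| ≤ μ * γ ^ 2) :
    γ ^ 2 * (α m * (1 + μ) - μ) ≤ ⟪∑ k ∈ s, α k • f k, f m⟫ := by
  have hrest : ∑ k ∈ s.erase m, α k * -(μ * γ ^ 2) ≤ ∑ k ∈ s.erase m, ⟪α k • f k, f m⟫ :=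
    sum_le_sum fun k hk => by
      rw [real_inner_smul_left]
      exact mul_le_mul_of_nonneg_left
        (neg_le_of_abs_le (hcoh k (mem_of_mem_erase hk) (ne_of_mem_erase hk)))
        (hα k (mem_of_mem_erase hk))
  have herase : ∑ k ∈ s.erase m, α k = 1 - α m := by
    rw [← hsum, ← add_sum_erase _ _ hm, add_sub_cancel_left]
  rw [← sum_mul, herase] at hrest
  rw [sum_inner, ← add_sum_erase _ _ hm, real_inner_smul_left, real_inner_self_eq_norm_sq, hnorm]
  linarith

theorem stmt_7 {N M : ℕ} (f : Fin M → EuclideanSpace ℝ (Fin N)) (γ μ : ℝ)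
    (hγ : 0 < γ) (hμ : 0 ≤ μ) (hnorm : ∀ i, ‖f i‖ = γ)
    (hcoh : ∀ i j, i ≠ j → |⟪f i, f j⟫| ≤ μ * γ ^ 2)
    (𝒦 : Finset (Fin M)) (K : ℕ) (hK : 1 ≤ K) (hcard : 𝒦.card = K)
    (σ : ℝ) (hσ : 0 < σ)
    (α : Fin M → ℝ) (hα : ∀ k ∈ 𝒦, 0 ≤ α k) (hsum : ∑ k ∈ 𝒦, α k = 1)
    (τ : ℝ) :
    ∃ m ∈ 𝒦,
      iidGaussian N σ
        {e | ⟪(∑ k ∈ 𝒦, α k • f k) + euc e, f m⟫ / γ ^ 2 < τ} ≤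
        gaussQ ((γ / σ) * (((1 + μ) / (K : ℝ) - μ) - τ)) := by
  obtain ⟨m, hm, hαm⟩ := exists_inv_card_le_of_sum_eq_one (card_pos.mp (by omega)) hsum
  refine ⟨m, hm, ?_⟩
  set c := ⟪∑ k ∈ 𝒦, α k • f k, f m⟫
  have hc : γ ^ 2 * ((1 + μ) / K - μ) ≤ c := by
    refine le_trans ?_ (le_inner_sum_smul f hα hsum hm (hnorm m) fun k _ hk => hcoh k m hk)
    rw [← hcard, div_eq_inv_mul]
    gcongr
  have hs : (‖σ • f m‖₊ : ℝ) = σ * γ := by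
    rw [coe_nnnorm, norm_smul, hnorm, Real.norm_of_nonneg hσ.le]
  have hevent : {e | ⟪(∑ k ∈ 𝒦, α k • f k) + euc e, f m⟫ / γ ^ 2 < τ}
      ⊆ (fun e => ⟪euc e, f m⟫) ⁻¹' Set.Iic (-(c - τ * γ ^ 2)) := by
    intro e he
    rw [Set.mem_ofPred_eq, inner_add_left, div_lt_iff₀ (by positivity)] at he
    simp only [Set.mem_preimage, Set.mem_Iic]
    linarith
  calc iidGaussian N σ {e | ⟪(∑ k ∈ 𝒦, α k • f k) + euc e, f m⟫ / γ ^ 2 < τ}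
      ≤ (iidGaussian N σ).map (fun e => ⟪euc e, f m⟫) (Set.Iic (-(c - τ * γ ^ 2))) := by
        rw [Measure.map_apply (by fun_prop) measurableSet_Iic]
        exact measure_mono hevent
    _ = gaussQ ((c - τ * γ ^ 2) / (σ * γ)) := by
        have hpos : 0 < ‖σ • f m‖₊ := by rw [← NNReal.coe_pos, hs]; positivity
        rw [iidGaussian_map_inner, gaussianReal_sq_Iic_neg_eq_gaussQ hpos, hs]
    _ ≤ gaussQ ((γ / σ) * (((1 + μ) / (K : ℝ) - μ) - τ)) := by
        refine gaussQ_antitone ?_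
        calc (γ / σ) * (((1 + μ) / (K : ℝ) - μ) - τ)
            = (γ ^ 2 * ((1 + μ) / K - μ) - τ * γ ^ 2) / (σ * γ) := by field_simp
          _ ≤ (c - τ * γ ^ 2) / (σ * γ) := by gcongr
end
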